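/- If μ′ = μ + (r,r,…,r) for r ∈ ℕ, then every non-attacking filling of μ′ restricted appropriately gives E_{μ′}(x;q,t) = (x_1⋯x_n)^r · E_μ(x;q,t), where both sides are given by the HHL combinatorial formula; equivalently, the combinatorial sum C_{μ′} equals (x_1⋯x_n)^r C_μ. In particular this follows at the level of the defining recursion from (n-fold iteration of) the cyclic-shift identity C_{π(μ)} = q^{μ_n} Ψ C_μ. -/

import Mathlib

/-!
Adding a cell at the bottom of every column and putting `i` into the new cell `(i, 1)` of
column `i` maps the fillings of `μ` bijectively onto the fillings of `μ + (1,…,1)` whose row 1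
is the identity, and every non-attacking filling is of this form: its row 1 is injective and
`σ(i, 1) = j > i` is impossible because the basement cell `(j, 0)` attacks `(i, 1)`; an
injective map `[n] → [n]` with `σ(i) ≤ i` is the identity. The rest of the filling is moved up
one row, which preserves attacks, reading order, arms and legs; the new row creates no descents,
no co-inversion triples and no factor `(1 - t)/(1 - q^{l+1} t^{a+1})`, and it contributes
`x_1 ⋯ x_n`. Iterating gives `C_{μ + (r,…,r)} = (x_1 ⋯ x_n)^r C_μ`.
-/

open Finset

noncomputable section
attribute [local instance] Classical.propDecidable

/-- `u` lies in the column diagram of the composition `μ` (columns `1,…,n`). -/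
def dgIn (n : ℕ) (μ : ℕ → ℕ) (u : ℕ × ℕ) : Prop :=
  1 ≤ u.1 ∧ u.1 ≤ n ∧ 1 ≤ u.2 ∧ u.2 ≤ μ u.1

/-- `u` lies in the augmented diagram of `μ` (row `0` added). -/
def augIn (n : ℕ) (μ : ℕ → ℕ) (u : ℕ × ℕ) : Prop :=
  1 ≤ u.1 ∧ u.1 ≤ n ∧ u.2 ≤ μ u.1

/-- The column diagram of `μ` as a finite set. -/
def dgF (n : ℕ) (μ : ℕ → ℕ) : Finset (ℕ × ℕ) :=
  (Finset.Icc 1 n).biUnion (fun i => (Finset.Icc 1 (μ i)).image (fun j => (i, j)))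

/-- The augmented diagram of `μ` as a finite set. -/
def augF (n : ℕ) (μ : ℕ → ℕ) : Finset (ℕ × ℕ) :=
  (Finset.Icc 1 n).biUnion (fun i => (Finset.Icc 0 (μ i)).image (fun j => (i, j)))

/-- The box directly below `u`. -/
def dbox (u : ℕ × ℕ) : ℕ × ℕ := (u.1, u.2 - 1)

/-- `v` belongs to the arm of `u` (left arm or right arm). -/
def armIn (n : ℕ) (μ : ℕ → ℕ) (u v : ℕ × ℕ) : Prop :=
  (dgIn n μ v ∧ v.2 = u.2 ∧ v.1 < u.1 ∧ μ v.1 ≤ μ u.1) ∨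
  (augIn n μ v ∧ v.2 + 1 = u.2 ∧ u.1 < v.1 ∧ μ v.1 < μ u.1)

/-- The arm of `u` as a finite set. -/
def armF (n : ℕ) (μ : ℕ → ℕ) (u : ℕ × ℕ) : Finset (ℕ × ℕ) :=
  (augF n μ).filter (fun v => armIn n μ u v)

/-- The leg length `l(u) = μ_i - j`. -/
def legLen (μ : ℕ → ℕ) (u : ℕ × ℕ) : ℕ := μ u.1 - u.2

/-- The arm length `a(u) = |arm(u)|`. -/
def armLen (n : ℕ) (μ : ℕ → ℕ) (u : ℕ × ℕ) : ℕ := (armF n μ u).card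

/-- Two distinct boxes attack each other: same row, or consecutive rows with
the lower box strictly to the right. -/
def attacks (u v : ℕ × ℕ) : Prop :=
  u ≠ v ∧ (u.2 = v.2 ∨ (u.2 = v.2 + 1 ∧ u.1 < v.1) ∨ (v.2 = u.2 + 1 ∧ v.1 < u.1))

/-- Reading order: rows top to bottom, right to left within a row. -/
def rlt (u v : ℕ × ℕ) : Prop := v.2 < u.2 ∨ (u.2 = v.2 ∧ v.1 < u.1)

/-- The augmented filling: value `i` in the row-0 box `(i,0)`. -/
def augOf (σ : ℕ × ℕ → ℕ) : ℕ × ℕ → ℕ := fun u => if u.2 = 0 then u.1 else σ u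

/-- The (augmented) filling is non-attacking. -/
def NonAttacking (n : ℕ) (μ : ℕ → ℕ) (σh : ℕ × ℕ → ℕ) : Prop :=
  ∀ u v : ℕ × ℕ, augIn n μ u → augIn n μ v → attacks u v → σh u ≠ σh v

/-- The set of inversions of an augmented filling: attacking pairs,
earlier box (in reading order) having the larger entry. -/
def invF (n : ℕ) (μ : ℕ → ℕ) (σh : ℕ × ℕ → ℕ) : Finset ((ℕ × ℕ) × (ℕ × ℕ)) :=
  ((augF n μ) ×ˢ (augF n μ)).filter
    (fun p => attacks p.1 p.2 ∧ rlt p.1 p.2 ∧ σh p.2 < σh p.1)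

/-- The descent set of an augmented filling. -/
def desF (n : ℕ) (μ : ℕ → ℕ) (σh : ℕ × ℕ → ℕ) : Finset (ℕ × ℕ) :=
  (dgF n μ).filter (fun u => σh (dbox u) < σh u)

/-- maj = sum of `l(u)+1` over descents. -/
def majStat (n : ℕ) (μ : ℕ → ℕ) (σh : ℕ × ℕ → ℕ) : ℕ :=
  ∑ u ∈ desF n μ σh, (legLen μ u + 1)

/-- `χ_{xy} = 1` iff the earlier box in reading order carries the larger entry. -/
def chi (σh : ℕ × ℕ → ℕ) (x y : ℕ × ℕ) : ℕ :=
  if (rlt x y ∧ σh y < σh x) ∨ (rlt y x ∧ σh x < σh y) then 1 else 0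

/-- Triples `(u, v, d(u))`, encoded by the pair `(u, v)` with `v ∈ arm(u)`. -/
def triplesF (n : ℕ) (μ : ℕ → ℕ) : Finset ((ℕ × ℕ) × (ℕ × ℕ)) :=
  ((dgF n μ) ×ˢ (augF n μ)).filter (fun p => armIn n μ p.1 p.2)

/-- Inversion triples: `χ_{uv} + χ_{vw} - χ_{uw} = 1` where `w = d(u)`. -/
def invTriplesF (n : ℕ) (μ : ℕ → ℕ) (σh : ℕ × ℕ → ℕ) : Finset ((ℕ × ℕ) × (ℕ × ℕ)) :=
  (triplesF n μ).filter
    (fun p => chi σh p.1 p.2 + chi σh p.2 (dbox p.1) = chi σh p.1 (dbox p.1) + 1)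

/-- Co-inversion triples: `χ_{uv} + χ_{vw} - χ_{uw} = 0` where `w = d(u)`. -/
def coinvTriplesF (n : ℕ) (μ : ℕ → ℕ) (σh : ℕ × ℕ → ℕ) : Finset ((ℕ × ℕ) × (ℕ × ℕ)) :=
  (triplesF n μ).filter
    (fun p => chi σh p.1 p.2 + chi σh p.2 (dbox p.1) = chi σh p.1 (dbox p.1))

/-- coinv = number of co-inversion triples. -/
def coinvStat (n : ℕ) (μ : ℕ → ℕ) (σh : ℕ × ℕ → ℕ) : ℕ := (coinvTriplesF n μ σh).card

/-- `σ` is a filling of `μ`, i.e. takes values in `[n]` on the diagram. -/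
def IsFilling (n : ℕ) (μ : ℕ → ℕ) (σ : ℕ × ℕ → ℕ) : Prop :=
  ∀ u : ℕ × ℕ, dgIn n μ u → 1 ≤ σ u ∧ σ u ≤ n

/-- Extend a filling of the diagram (with values in `Fin n`, shifted to `[n]`)
to a function on all boxes. -/
def extFill (n : ℕ) (μ : ℕ → ℕ) (σ : {u // u ∈ dgF n μ} → Fin n) : ℕ × ℕ → ℕ :=
  fun u => if h : u ∈ dgF n μ then ((σ ⟨u, h⟩ : Fin n) : ℕ) + 1 else 0

/-- The Haglund–Haiman–Loehr combinatorial sum `C_μ(x; q, t)`, a sum over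
non-attacking fillings of the column diagram of `μ`. -/
def Cmu (F : Type) [Field F] (n : ℕ) (μ : ℕ → ℕ) (q t : F) (x : ℕ → F) : F :=
  ∑ σ : ({u // u ∈ dgF n μ} → Fin n),
    if NonAttacking n μ (augOf (extFill n μ σ)) then
      (∏ u ∈ dgF n μ, x (augOf (extFill n μ σ) u)) *
        q ^ majStat n μ (augOf (extFill n μ σ)) *
        t ^ coinvStat n μ (augOf (extFill n μ σ)) *
        ∏ u ∈ (dgF n μ).filter
            (fun u => augOf (extFill n μ σ) u ≠ augOf (extFill n μ σ) (dbox u)),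
          ((1 - t) / (1 - q ^ (legLen μ u + 1) * t ^ (armLen n μ u + 1)))
    else 0

section Diagram

variable {n : ℕ} {μ : ℕ → ℕ} {u v : ℕ × ℕ}

lemma mem_dgF : u ∈ dgF n μ ↔ dgIn n μ u := by
  simp only [dgF, dgIn, mem_biUnion, mem_image, mem_Icc]
  constructor
  · rintro ⟨i, hi, j, hj, rfl⟩
    exact ⟨hi.1, hi.2, hj⟩
  · rintro ⟨h1, h2, h3, h4⟩
    exact ⟨u.1, ⟨h1, h2⟩, u.2, ⟨h3, h4⟩, rfl⟩

lemma mem_augF : u ∈ augF n μ ↔ augIn n μ u := by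
  simp only [augF, augIn, mem_biUnion, mem_image, mem_Icc]
  constructor
  · rintro ⟨i, hi, j, hj, rfl⟩
    exact ⟨hi.1, hi.2, hj.2⟩
  · rintro ⟨h1, h2, h3⟩
    exact ⟨u.1, ⟨h1, h2⟩, u.2, ⟨Nat.zero_le _, h3⟩, rfl⟩

lemma mem_triplesF {p : (ℕ × ℕ) × (ℕ × ℕ)} :
    p ∈ triplesF n μ ↔ dgIn n μ p.1 ∧ augIn n μ p.2 ∧ armIn n μ p.1 p.2 := by
  simp only [triplesF, mem_filter, mem_product, mem_dgF, mem_augF, and_assoc]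

lemma augIn_of_dgIn (h : dgIn n μ u) : augIn n μ u :=
  ⟨h.1, h.2.1, h.2.2.2⟩

lemma augIn_dbox (h : dgIn n μ u) : augIn n μ (dbox u) := by
  simp only [dgIn, augIn, dbox] at h ⊢
  omega

lemma dgIn_iff_augIn (h : 1 ≤ u.2) : dgIn n μ u ↔ augIn n μ u := by
  simp only [dgIn, augIn]
  omega

end Diagram

def boxUp (u : ℕ × ℕ) : ℕ × ℕ := (u.1, u.2 + 1)

section BoxUp

variable {n : ℕ} {μ : ℕ → ℕ} {u v : ℕ × ℕ}

lemma boxUp_injective : Function.Injective boxUp := fun u v h => by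
  simp only [boxUp, Prod.ext_iff] at h ⊢
  omega

@[simp]
lemma dbox_boxUp (u : ℕ × ℕ) : dbox (boxUp u) = u := by
  simp [dbox, boxUp]

lemma boxUp_dbox (h : 1 ≤ u.2) : boxUp (dbox u) = u :=
  Prod.ext rfl (Nat.sub_add_cancel h)

lemma exists_eq_boxUp (h : 1 ≤ u.2) : ∃ w, u = boxUp w :=
  ⟨dbox u, (boxUp_dbox h).symm⟩

lemma mem_image_boxUp {s : Finset (ℕ × ℕ)} :
    u ∈ s.image boxUp ↔ 1 ≤ u.2 ∧ dbox u ∈ s := by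
  rw [mem_image]
  constructor
  · rintro ⟨w, hw, rfl⟩
    exact ⟨by simp [boxUp], by simpa using hw⟩
  · rintro ⟨h, hs⟩
    exact ⟨dbox u, hs, boxUp_dbox h⟩

lemma attacks_boxUp : attacks (boxUp u) (boxUp v) ↔ attacks u v := by
  simp only [attacks, boxUp, ne_eq, Prod.ext_iff]
  omega

lemma rlt_boxUp : rlt (boxUp u) (boxUp v) ↔ rlt u v := by
  simp only [rlt, boxUp]
  omega

lemma augIn_succ_boxUp : augIn n (fun i => μ i + 1) (boxUp u) ↔ augIn n μ u := by
  simp only [augIn, boxUp]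
  omega

lemma dgIn_succ_boxUp : dgIn n (fun i => μ i + 1) (boxUp u) ↔ augIn n μ u := by
  simp only [dgIn, augIn, boxUp]
  omega

lemma armIn_succ_boxUp (hu : 1 ≤ u.2) :
    armIn n (fun i => μ i + 1) (boxUp u) (boxUp v) ↔ armIn n μ u v := by
  simp only [armIn, dgIn, augIn, boxUp]
  omega

lemma legLen_succ_boxUp : legLen (fun i => μ i + 1) (boxUp u) = legLen μ u := by
  simp only [legLen, boxUp]
  omega

lemma armF_succ_boxUp (hu : 1 ≤ u.2) :
    armF n (fun i => μ i + 1) (boxUp u) = (armF n μ u).image boxUp := by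
  ext v
  rw [mem_image_boxUp]
  simp only [armF, mem_filter, mem_augF]
  by_cases hv : 1 ≤ v.2
  · obtain ⟨v, rfl⟩ := exists_eq_boxUp hv
    simp only [dbox_boxUp, augIn_succ_boxUp, armIn_succ_boxUp hu, hv, true_and]
  · simp only [armIn, dgIn, augIn, boxUp] at hv ⊢
    omega

lemma armLen_succ_boxUp (hu : 1 ≤ u.2) :
    armLen n (fun i => μ i + 1) (boxUp u) = armLen n μ u := by
  rw [armLen, armF_succ_boxUp hu, card_image_of_injective _ boxUp_injective, armLen]

lemma dgF_succ : dgF n (fun i => μ i + 1) =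
    (Icc 1 n).image (fun i => (i, 1)) ∪ (dgF n μ).image boxUp := by
  ext ⟨i, j⟩
  rw [mem_union, mem_image_boxUp, mem_image, mem_dgF, mem_dgF]
  simp only [mem_Icc, dgIn, dbox, Prod.mk.injEq]
  constructor
  · intro h
    by_cases hj : j = 1
    · exact Or.inl ⟨i, ⟨h.1, h.2.1⟩, rfl, hj.symm⟩
    · right; omega
  · rintro (⟨k, hk, rfl, rfl⟩ | h) <;> omega

lemma prod_dgF_succ {M : Type*} [CommMonoid M] (f : ℕ × ℕ → M) :
    ∏ u ∈ dgF n (fun i => μ i + 1), f u =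
      (∏ i ∈ Icc 1 n, f (i, 1)) * ∏ u ∈ dgF n μ, f (boxUp u) := by
  have hdisj : Disjoint ((Icc 1 n).image (fun i => (i, 1))) ((dgF n μ).image boxUp) := by
    rw [disjoint_left]
    rintro _ hrow hup
    obtain ⟨i, -, rfl⟩ := mem_image.1 hrow
    simpa [dbox, mem_dgF, dgIn] using mem_image_boxUp.1 hup
  rw [dgF_succ, prod_union hdisj, prod_image (fun i _ j _ h => (Prod.ext_iff.1 h).1),
    prod_image boxUp_injective.injOn]

end BoxUp

/-- Moves an augmented filling up by one row and puts a fresh basement below it. -/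
def shiftUp (e : ℕ × ℕ → ℕ) : ℕ × ℕ → ℕ := augOf (fun u => e (dbox u))

section ShiftUp

variable {n : ℕ} {μ : ℕ → ℕ} {u v : ℕ × ℕ} (σ : ℕ × ℕ → ℕ)

lemma shiftUp_of_pos (e : ℕ × ℕ → ℕ) (h : 1 ≤ u.2) : shiftUp e u = e (dbox u) := by
  simp only [shiftUp, augOf, if_neg (show u.2 ≠ 0 by omega)]

@[simp]
lemma shiftUp_boxUp (e : ℕ × ℕ → ℕ) (u : ℕ × ℕ) : shiftUp e (boxUp u) = e u := by
  rw [shiftUp_of_pos e (by simp [boxUp]), dbox_boxUp]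

lemma shiftUp_augOf_of_le_one (h : u.2 ≤ 1) : shiftUp (augOf σ) u = u.1 := by
  obtain ⟨i, j⟩ := u
  interval_cases j <;> simp [shiftUp, augOf, dbox]

lemma chi_shiftUp_boxUp (e : ℕ × ℕ → ℕ) (u v : ℕ × ℕ) :
    chi (shiftUp e) (boxUp u) (boxUp v) = chi e u v := by
  simp only [chi, shiftUp_boxUp, rlt_boxUp]

lemma nonAttacking_shiftUp :
    NonAttacking n (fun i => μ i + 1) (shiftUp (augOf σ)) ↔ NonAttacking n μ (augOf σ) := by
  constructor
  · intro H u v hu hv huv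
    simpa using H _ _ (augIn_succ_boxUp.2 hu) (augIn_succ_boxUp.2 hv) (attacks_boxUp.2 huv)
  · intro H u v hu hv huv
    by_cases hpos : 1 ≤ u.2 ∧ 1 ≤ v.2
    · obtain ⟨u, rfl⟩ := exists_eq_boxUp hpos.1
      obtain ⟨v, rfl⟩ := exists_eq_boxUp hpos.2
      simpa using H u v (augIn_succ_boxUp.1 hu) (augIn_succ_boxUp.1 hv) (attacks_boxUp.1 huv)
    · -- attacking cells lie in adjacent rows, so here both lie in rows 0 and 1
      obtain ⟨hne, hrows⟩ := huv
      rw [Ne, Prod.ext_iff] at hne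
      rw [shiftUp_augOf_of_le_one σ (by omega), shiftUp_augOf_of_le_one σ (by omega)]
      omega

lemma filter_dgF_succ_shiftUp (r : ℕ → ℕ → Prop) [DecidableRel r] (hr : ∀ a, ¬ r a a) :
    (dgF n (fun i => μ i + 1)).filter
        (fun u => r (shiftUp (augOf σ) u) (shiftUp (augOf σ) (dbox u)))
      = ((dgF n μ).filter (fun u => r (augOf σ u) (augOf σ (dbox u)))).image boxUp := by
  rw [dgF_succ, filter_union, filter_image, filter_image, filter_false_of_mem, image_empty,
    empty_union]
  · refine congrArg _ (filter_congr fun u hu => ?_)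
    rw [shiftUp_boxUp, dbox_boxUp, shiftUp_of_pos _ (mem_dgF.1 hu).2.2.1]
  · intro i _
    rw [shiftUp_augOf_of_le_one σ le_rfl, shiftUp_augOf_of_le_one σ (by simp [dbox])]
    exact hr i

lemma majStat_shiftUp :
    majStat n (fun i => μ i + 1) (shiftUp (augOf σ)) = majStat n μ (augOf σ) := by
  have hdes : desF n (fun i => μ i + 1) (shiftUp (augOf σ)) =
      (desF n μ (augOf σ)).image boxUp :=
    filter_dgF_succ_shiftUp σ (fun a b => b < a) lt_irrefl
  rw [majStat, hdes, sum_image boxUp_injective.injOn]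
  simp only [legLen_succ_boxUp, majStat]

end ShiftUp

section Coinv

variable {n : ℕ} {μ : ℕ → ℕ} {u v : ℕ × ℕ} (σ : ℕ × ℕ → ℕ)

lemma not_coinv_of_row_one (hu : u.2 = 1) (harm : armIn n (fun i => μ i + 1) u v) :
    chi (shiftUp (augOf σ)) u v + chi (shiftUp (augOf σ)) v (dbox u) ≠
      chi (shiftUp (augOf σ)) u (dbox u) := by
  have hv : (v.2 = 1 ∧ v.1 < u.1) ∨ (v.2 = 0 ∧ u.1 < v.1) := by
    simp only [armIn, dgIn, augIn] at harm
    omega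
  obtain ⟨i, j⟩ := u
  obtain rfl : j = 1 := hu
  have hcol : ∀ w : ℕ × ℕ, w.2 ≤ 1 → shiftUp (augOf σ) w = w.1 :=
    fun w hw => shiftUp_augOf_of_le_one σ hw
  rw [show dbox (i, 1) = (i, 0) from rfl]
  simp only [chi, rlt, hcol (i, 1) le_rfl, hcol (i, 0) zero_le_one, hcol v (by omega)]
  split_ifs <;> omega

lemma mem_coinvTriplesF_succ_boxUp (hu : 1 ≤ u.2) :
    (boxUp u, boxUp v) ∈ coinvTriplesF n (fun i => μ i + 1) (shiftUp (augOf σ)) ↔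
      (u, v) ∈ coinvTriplesF n μ (augOf σ) := by
  obtain ⟨w, rfl⟩ := exists_eq_boxUp hu
  simp only [coinvTriplesF, mem_filter, mem_triplesF, dgIn_succ_boxUp, augIn_succ_boxUp,
    armIn_succ_boxUp hu, dgIn_iff_augIn hu, dbox_boxUp, chi_shiftUp_boxUp]

lemma coinvStat_shiftUp :
    coinvStat n (fun i => μ i + 1) (shiftUp (augOf σ)) = coinvStat n μ (augOf σ) := by
  have hinj : Function.Injective (Prod.map boxUp boxUp) :=
    Prod.map_injective.2 ⟨boxUp_injective, boxUp_injective⟩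
  suffices coinvTriplesF n (fun i => μ i + 1) (shiftUp (augOf σ)) =
      (coinvTriplesF n μ (augOf σ)).image (Prod.map boxUp boxUp) by
    rw [coinvStat, this, card_image_of_injective _ hinj, coinvStat]
  ext p
  by_cases hp : 2 ≤ p.1.2 ∧ 1 ≤ p.2.2
  · obtain ⟨u, v⟩ := p
    simp only at hp
    obtain ⟨u, rfl⟩ := exists_eq_boxUp (show 1 ≤ u.2 by omega)
    obtain ⟨v, rfl⟩ := exists_eq_boxUp hp.2
    rw [show (boxUp u, boxUp v) = Prod.map boxUp boxUp (u, v) from rfl, hinj.mem_finset_image]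
    exact mem_coinvTriplesF_succ_boxUp σ (by simpa [boxUp] using hp.1)
  · constructor
    · intro h
      simp only [coinvTriplesF, mem_filter, mem_triplesF] at h
      obtain ⟨⟨hu, -, harm⟩, hcoinv⟩ := h
      have hu2 : p.1.2 ≠ 1 := fun hu1 => not_coinv_of_row_one σ hu1 harm hcoinv
      simp only [armIn, dgIn, augIn] at harm hu
      omega
    · intro h
      obtain ⟨⟨u, v⟩, hmem, rfl⟩ := mem_image.1 h
      simp only [coinvTriplesF, mem_filter, mem_triplesF] at hmem
      simp only [Prod.map, boxUp] at hp
      obtain ⟨⟨hu, -, harm⟩, -⟩ := hmem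
      simp only [armIn, dgIn, augIn] at harm hu
      omega

end Coinv

def fillingWeight (F : Type) [Field F] (n : ℕ) (μ : ℕ → ℕ) (q t : F) (x : ℕ → F)
    (e : ℕ × ℕ → ℕ) : F :=
  if NonAttacking n μ e then
    (∏ u ∈ dgF n μ, x (e u)) * q ^ majStat n μ e * t ^ coinvStat n μ e *
      ∏ u ∈ (dgF n μ).filter (fun u => e u ≠ e (dbox u)),
        ((1 - t) / (1 - q ^ (legLen μ u + 1) * t ^ (armLen n μ u + 1)))
  else 0

section Weight

variable (F : Type) [Field F] (n : ℕ) (μ : ℕ → ℕ) (q t : F) (x : ℕ → F)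

lemma Cmu_eq_sum_fillingWeight :
    Cmu F n μ q t x = ∑ σ, fillingWeight F n μ q t x (augOf (extFill n μ σ)) :=
  rfl

variable {F n μ q t x}

lemma fillingWeight_congr {e f : ℕ × ℕ → ℕ} (h : ∀ u, augIn n μ u → e u = f u) :
    fillingWeight F n μ q t x e = fillingWeight F n μ q t x f := by
  have hdg : ∀ u ∈ dgF n μ, e u = f u := fun u hu => h u (augIn_of_dgIn (mem_dgF.1 hu))
  have hdbox : ∀ u ∈ dgF n μ, e (dbox u) = f (dbox u) :=
    fun u hu => h _ (augIn_dbox (mem_dgF.1 hu))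
  have hna : NonAttacking n μ e ↔ NonAttacking n μ f := by
    refine forall₂_congr fun u v => ?_
    exact imp_congr_right fun hu => imp_congr_right fun hv => by rw [h u hu, h v hv]
  have hdes : desF n μ e = desF n μ f :=
    filter_congr fun u hu => by rw [hdg u hu, hdbox u hu]
  have hcoinv : coinvTriplesF n μ e = coinvTriplesF n μ f := filter_congr fun p hp => by
    obtain ⟨h1, h2, -⟩ := mem_triplesF.1 hp
    simp only [chi, h _ (augIn_of_dgIn h1), h _ h2, h _ (augIn_dbox h1)]
  have hjump : (dgF n μ).filter (fun u => e u ≠ e (dbox u)) =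
      (dgF n μ).filter (fun u => f u ≠ f (dbox u)) :=
    filter_congr fun u hu => by rw [hdg u hu, hdbox u hu]
  simp only [fillingWeight, majStat, coinvStat, hna, hdes, hcoinv, hjump,
    prod_congr rfl fun u hu => congrArg x (hdg u hu)]

lemma fillingWeight_shiftUp (σ : ℕ × ℕ → ℕ) :
    fillingWeight F n (fun i => μ i + 1) q t x (shiftUp (augOf σ)) =
      (∏ i ∈ Icc 1 n, x i) * fillingWeight F n μ q t x (augOf σ) := by
  have hx : ∏ u ∈ dgF n (fun i => μ i + 1), x (shiftUp (augOf σ) u) =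
      (∏ i ∈ Icc 1 n, x i) * ∏ u ∈ dgF n μ, x (augOf σ u) := by
    have hrow : ∀ i, shiftUp (augOf σ) (i, 1) = i := fun i => shiftUp_augOf_of_le_one σ le_rfl
    simp only [prod_dgF_succ, shiftUp_boxUp, hrow]
  have hjump : ∏ u ∈ (dgF n (fun i => μ i + 1)).filter
          (fun u => shiftUp (augOf σ) u ≠ shiftUp (augOf σ) (dbox u)),
        ((1 - t) / (1 - q ^ (legLen (fun i => μ i + 1) u + 1) *
          t ^ (armLen n (fun i => μ i + 1) u + 1))) =
      ∏ u ∈ (dgF n μ).filter (fun u => augOf σ u ≠ augOf σ (dbox u)),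
        ((1 - t) / (1 - q ^ (legLen μ u + 1) * t ^ (armLen n μ u + 1))) := by
    rw [filter_dgF_succ_shiftUp σ (· ≠ ·) fun a h => h rfl, prod_image boxUp_injective.injOn]
    refine prod_congr rfl fun u hu => ?_
    rw [legLen_succ_boxUp, armLen_succ_boxUp (mem_dgF.1 (mem_filter.1 hu).1).2.2.1]
  simp only [fillingWeight, nonAttacking_shiftUp, majStat_shiftUp, coinvStat_shiftUp, hx, hjump]
  split_ifs
  · ring
  · rw [mul_zero]

end Weight

lemma eq_self_of_injOn_of_le {M : Type*} [AddCommMonoid M] [PartialOrder M]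
    [IsOrderedCancelAddMonoid M] {s : Finset M} {f : M → M} (hmaps : Set.MapsTo f s s)
    (hinj : Set.InjOn f s) (hle : ∀ i ∈ s, f i ≤ i) : ∀ i ∈ s, f i = i := by
  have himage : s.image f = s :=
    eq_of_subset_of_card_le (image_subset_iff.2 hmaps) (card_image_of_injOn hinj).ge
  refine (sum_eq_sum_iff_of_le hle).1 ?_
  conv_rhs => rw [← himage]
  rw [sum_image hinj]

section Filling

variable {n : ℕ} {μ : ℕ → ℕ} {u : ℕ × ℕ}

lemma row_one_eq_of_nonAttacking {e : ℕ × ℕ → ℕ} (hna : NonAttacking n μ e)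
    (hμ : ∀ i ∈ Icc 1 n, 1 ≤ μ i) (hzero : ∀ i, e (i, 0) = i)
    (hrange : ∀ i ∈ Icc 1 n, e (i, 1) ∈ Icc 1 n) : ∀ i ∈ Icc 1 n, e (i, 1) = i := by
  have hcell : ∀ i ∈ Icc 1 n, augIn n μ (i, 1) :=
    fun i hi => ⟨(mem_Icc.1 hi).1, (mem_Icc.1 hi).2, hμ i hi⟩
  refine eq_self_of_injOn_of_le (f := fun i => e (i, 1)) (fun i hi => hrange i hi)
    (fun i hi j hj hij => ?_) fun i hi => ?_
  · by_contra hne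
    exact hna _ _ (hcell i hi) (hcell j hj) ⟨by simpa using hne, Or.inl rfl⟩ hij
  · -- otherwise the basement cell `(e (i, 1), 0)` attacks `(i, 1)` and carries the same entry
    by_contra hlt
    obtain ⟨hj1, hjn⟩ := mem_Icc.1 (hrange i hi)
    exact hna (i, 1) (e (i, 1), 0) (hcell i hi) ⟨hj1, hjn, Nat.zero_le _⟩
      ⟨by simp, Or.inr (Or.inl ⟨rfl, not_le.1 hlt⟩)⟩ (hzero _).symm

variable (σ : {u // u ∈ dgF n μ} → Fin n)

lemma augOf_extFill_of_mem (hu : u ∈ dgF n μ) :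
    augOf (extFill n μ σ) u = σ ⟨u, hu⟩ + 1 := by
  have hrow : u.2 ≠ 0 := by have := (mem_dgF.1 hu).2.2.1; omega
  simp only [augOf, extFill, dif_pos hu, if_neg hrow]

lemma augOf_extFill_mem_Icc (hu : u ∈ dgF n μ) : augOf (extFill n μ σ) u ∈ Icc 1 n := by
  rw [augOf_extFill_of_mem σ hu, mem_Icc]
  omega

/-- The filling of `μ + (1,…,1)` with `i` in the new bottom cell of column `i` and `σ` above it
(entries in `Fin n` are stored minus one). -/
def liftFilling (n : ℕ) (μ : ℕ → ℕ) (σ : {u // u ∈ dgF n μ} → Fin n) :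
    {u // u ∈ dgF n (fun i => μ i + 1)} → Fin n :=
  fun w => if h : dbox w.1 ∈ dgF n μ then σ ⟨dbox w.1, h⟩ else
    ⟨w.1.1 - 1, by have := mem_dgF.1 w.2; simp only [dgIn] at this; omega⟩

lemma boxUp_mem_dgF_succ (hu : u ∈ dgF n μ) : boxUp u ∈ dgF n (fun i => μ i + 1) :=
  mem_dgF.2 (dgIn_succ_boxUp.2 (augIn_of_dgIn (mem_dgF.1 hu)))

lemma liftFilling_boxUp (hu : u ∈ dgF n μ) :
    liftFilling n μ σ ⟨boxUp u, boxUp_mem_dgF_succ hu⟩ = σ ⟨u, hu⟩ := by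
  simp [liftFilling, hu]

lemma liftFilling_injective : Function.Injective (liftFilling n μ) := fun σ τ h =>
  funext fun ⟨u, hu⟩ => by
    have := congrFun h ⟨boxUp u, boxUp_mem_dgF_succ hu⟩
    rwa [liftFilling_boxUp, liftFilling_boxUp] at this

lemma augOf_extFill_liftFilling (u : ℕ × ℕ) (hu : augIn n (fun i => μ i + 1) u) :
    augOf (extFill n (fun i => μ i + 1) (liftFilling n μ σ)) u =
      shiftUp (augOf (extFill n μ σ)) u := by
  rcases Nat.eq_zero_or_pos u.2 with h0 | hpos
  · simp [shiftUp, augOf, h0]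
  have hmem : u ∈ dgF n (fun i => μ i + 1) := mem_dgF.2 ((dgIn_iff_augIn hpos).2 hu)
  rw [augOf_extFill_of_mem _ hmem, shiftUp_of_pos _ hpos, liftFilling]
  split_ifs with h
  · rw [augOf_extFill_of_mem _ h]
  · have hrow : u.2 = 1 := by
      by_contra
      exact h (mem_dgF.2 (by simp only [augIn, dgIn, dbox] at hu ⊢; omega))
    simp only [augOf, dbox, hrow, if_pos]
    simp only [augIn] at hu
    omega

lemma exists_liftFilling_eq (σ' : {u // u ∈ dgF n (fun i => μ i + 1)} → Fin n)
    (hna : NonAttacking n (fun i => μ i + 1) (augOf (extFill n (fun i => μ i + 1) σ'))) :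
    ∃ σ, liftFilling n μ σ = σ' := by
  refine ⟨fun w => σ' ⟨boxUp w.1, boxUp_mem_dgF_succ w.2⟩, funext fun ⟨u, hu⟩ => ?_⟩
  have hu' := mem_dgF.1 hu
  rw [liftFilling]
  split_ifs with h
  · exact congrArg σ' (Subtype.ext (boxUp_dbox hu'.2.2.1))
  obtain ⟨i, j⟩ := u
  obtain rfl : j = 1 := by
    by_contra
    exact h (mem_dgF.2 (by simp only [dgIn, dbox] at hu' ⊢; omega))
  have hrange : ∀ k ∈ Icc 1 n, augOf (extFill n (fun i => μ i + 1) σ') (k, 1) ∈ Icc 1 n :=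
    fun k hk => augOf_extFill_mem_Icc σ' (mem_dgF.2
      ⟨(mem_Icc.1 hk).1, (mem_Icc.1 hk).2, le_rfl, Nat.le_add_left 1 (μ k)⟩)
  have hrow := row_one_eq_of_nonAttacking hna (fun k _ => Nat.le_add_left 1 (μ k))
    (fun k => by simp [augOf]) hrange i (mem_Icc.2 ⟨hu'.1, hu'.2.1⟩)
  rw [augOf_extFill_of_mem _ hu] at hrow
  exact Fin.ext (by simp only; omega)

end Filling

theorem Cmu_succ (F : Type) [Field F] (n : ℕ) (μ : ℕ → ℕ) (q t : F) (x : ℕ → F) :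
    Cmu F n (fun i => μ i + 1) q t x = (∏ i ∈ Icc 1 n, x i) * Cmu F n μ q t x := by
  rw [Cmu_eq_sum_fillingWeight, Cmu_eq_sum_fillingWeight, mul_sum]
  refine (Fintype.sum_of_injective (liftFilling n μ) liftFilling_injective _ _
    (fun σ' hσ' => ?_) fun σ => ?_).symm
  · rw [fillingWeight, if_neg]
    intro hna
    obtain ⟨σ, rfl⟩ := exists_liftFilling_eq σ' hna
    exact hσ' ⟨σ, rfl⟩
  · rw [fillingWeight_congr (augOf_extFill_liftFilling σ), fillingWeight_shiftUp]

theorem Cmu_add_const_general (F : Type) [Field F] (n : ℕ)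
    (μ : ℕ → ℕ) (r : ℕ) (q t : F) (x : ℕ → F) :
    Cmu F n (fun i => μ i + r) q t x =
      (∏ i ∈ Finset.Icc 1 n, x i) ^ r * Cmu F n μ q t x := by
  induction r with
  | zero => simp
  | succ r ih =>
    simp only [← add_assoc]
    rw [Cmu_succ, ih, pow_succ', mul_assoc]

/-- if `μ' = μ + (r,…,r)` then
`C_{μ'}(x;q,t) = (x_1 ⋯ x_n)^r C_μ(x;q,t)`. -/
theorem Cmu_add_const (F : Type) [Field F] (n : ℕ) (hn : 1 ≤ n)
    (μ : ℕ → ℕ) (r : ℕ) (q t : F) (x : ℕ → F)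
    (hqt : ∀ k m : ℕ, 1 - q ^ (k + 1) * t ^ (m + 1) ≠ 0) :
    Cmu F n (fun i => μ i + r) q t x =
      (∏ i ∈ Finset.Icc 1 n, x i) ^ r * Cmu F n μ q t x :=
  Cmu_add_const_general F n μ r q t x
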